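/- arXiv:2601.23170 — 6 statements merged into one kernel-verified Lean document; each statement's English description precedes it below -/
import Mathlib

section
/- For nonnegative integers n, k, s with s ≤ k ≤ ⌊(n-1)/2⌋, we have ∑_{j=0}^{s} C(s+k-2j, s-j) · C(n-1-s-k+2j, j) = ∑_{l=0}^{s} C(n, l). -/
/-!
Write `s + k - 2j = t + 2(s - j)` and `n - 1 - s - k + 2j = u + 2j` with `t = k - s`, `u = n-1-s-k`,
so the left side is `F(s,t,u) = ∑_{i+j=s} C(t+2i, i) C(u+2j, j)`, symmetric in `t` and `u`.
Pascal's rule on one factor gives `F(s+1,t,u+1) = F(s+1,t,u) + F(s,t,u+2)`, and the partial row sums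
`R(s,N) = ∑_{l≤s} C(N,l)` satisfy the matching rule `R(s+1,N+1) = R(s+1,N) + R(s,N)`.
By induction on `s`, this reduces `F(s,t,u) = R(s, 2s+t+u+1)` to `t = u = 0`, where
`C(2m+2, m+1) = 2 C(2m+1, m)` gives `F(s+1,0,0) = 2 F(s,1,0) + C(2s+2, s+1)`, matching
`R(s+1,2s+3) = 2 R(s,2s+2) + C(2s+2,s+1)`.
-/

open Finset

def chooseConv (s t u : ℕ) : ℕ :=
  ∑ p ∈ antidiagonal s, (t + 2 * p.1).choose p.1 * (u + 2 * p.2).choose p.2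

namespace chooseConv

theorem comm (s t u : ℕ) : chooseConv s t u = chooseConv s u t := by
  rw [chooseConv, ← Nat.sum_antidiagonal_swap]
  exact sum_congr rfl fun _ _ => mul_comm _ _

@[simp]
theorem zero_left (t u : ℕ) : chooseConv 0 t u = 1 := by
  simp [chooseConv]

theorem succ_right_succ (s t u : ℕ) :
    chooseConv (s + 1) t (u + 1) = chooseConv (s + 1) t u + chooseConv s t (u + 2) := by
  have pascal : ∀ j, (u + 1 + 2 * (j + 1)).choose (j + 1)
      = (u + 2 * (j + 1)).choose (j + 1) + (u + 2 + 2 * j).choose j := by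
    intro j
    rw [show u + 1 + 2 * (j + 1) = (u + 2 + 2 * j) + 1 by ring, Nat.choose_succ_succ',
      show u + 2 * (j + 1) = u + 2 + 2 * j by ring, add_comm]
  simp only [chooseConv, Nat.sum_antidiagonal_succ', pascal]
  simp only [mul_add, sum_add_distrib, mul_zero, add_zero, Nat.choose_zero_right]
  ring

theorem succ_zero_zero (s : ℕ) :
    chooseConv (s + 1) 0 0 = 2 * chooseConv s 1 0 + (2 * s + 2).choose (s + 1) := by
  have halve : ∀ i, (2 * (i + 1)).choose (i + 1) = 2 * (1 + 2 * i).choose i := by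
    intro i
    rw [show 2 * (i + 1) = (2 * i + 1) + 1 by ring, Nat.choose_succ_succ', Nat.choose_symm_half,
      add_comm 1]
    ring
  rw [show 2 * s + 2 = 2 * (s + 1) by ring, halve]
  simp only [chooseConv, Nat.sum_antidiagonal_succ, zero_add, halve]
  simp only [mul_zero, Nat.choose_zero_right, one_mul, mul_sum]
  rw [add_comm]
  exact congrArg (· + _) (sum_congr rfl fun _ _ => by ring)

theorem eq_sum_range (s t u : ℕ) :
    chooseConv s t u
      = ∑ j ∈ range (s + 1), (t + 2 * (s - j)).choose (s - j) * (u + 2 * j).choose j := by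
  rw [chooseConv, ← Nat.sum_antidiagonal_swap]
  exact Nat.sum_antidiagonal_eq_sum_range_succ
    (fun j i => (t + 2 * i).choose i * (u + 2 * j).choose j) s

end chooseConv

theorem sum_range_choose_succ_succ (N s : ℕ) :
    ∑ l ∈ range (s + 2), (N + 1).choose l
      = ∑ l ∈ range (s + 2), N.choose l + ∑ l ∈ range (s + 1), N.choose l := by
  rw [sum_range_succ' _ (s + 1), sum_range_succ' (fun l => N.choose l) (s + 1)]
  simp only [Nat.choose_succ_succ', sum_add_distrib, Nat.choose_zero_right]
  ring

theorem chooseConv_eq_sum_range_choose (s t u : ℕ) :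
    chooseConv s t u = ∑ l ∈ range (s + 1), (2 * s + t + u + 1).choose l := by
  induction s generalizing t u with
  | zero => simp
  | succ s ih =>
    suffices h : ∀ t u, chooseConv (s + 1) t u = ∑ l ∈ range (s + 2), (2 * s + t + u + 3).choose l
      by rw [h, show 2 * (s + 1) + t + u + 1 = 2 * s + t + u + 3 by ring]
    have extend (t : ℕ)
        (h0 : chooseConv (s + 1) t 0 = ∑ l ∈ range (s + 2), (2 * s + t + 3).choose l) (u : ℕ) :
        chooseConv (s + 1) t u = ∑ l ∈ range (s + 2), (2 * s + t + u + 3).choose l := by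
      induction u with
      | zero => exact h0
      | succ u ihu =>
        calc chooseConv (s + 1) t (u + 1) = chooseConv (s + 1) t u + chooseConv s t (u + 2) :=
              chooseConv.succ_right_succ s t u
          _ = ∑ l ∈ range (s + 2), (2 * s + t + u + 3).choose l
                + ∑ l ∈ range (s + 1), (2 * s + t + u + 3).choose l := by rw [ihu, ih]; rfl
          _ = _ := (sum_range_choose_succ_succ _ s).symm
    have base : chooseConv (s + 1) 0 0 = ∑ l ∈ range (s + 2), (2 * s + 3).choose l :=
      calc chooseConv (s + 1) 0 0 = 2 * chooseConv s 1 0 + (2 * s + 2).choose (s + 1) :=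
            chooseConv.succ_zero_zero s
        _ = ∑ l ∈ range (s + 2), (2 * s + 2).choose l
              + ∑ l ∈ range (s + 1), (2 * s + 2).choose l := by
            rw [ih, sum_range_succ _ (s + 1)]; ring
        _ = _ := (sum_range_choose_succ_succ _ s).symm
    intro t u
    refine extend t ?_ u
    rw [chooseConv.comm]
    exact extend 0 base t

theorem stmt0 (n k s : ℕ) (h1 : s ≤ k) (h2 : k ≤ (n - 1) / 2) :
    ∑ j ∈ Finset.range (s + 1),
        (s + k - 2 * j).choose (s - j) * (n - 1 - s - k + 2 * j).choose j
      = ∑ l ∈ Finset.range (s + 1), n.choose l := by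
  rcases Nat.eq_zero_or_pos n with rfl | hn
  · obtain rfl : s = 0 := by omega
    simp
  · have key := chooseConv_eq_sum_range_choose s (k - s) (n - 1 - s - k)
    rw [chooseConv.eq_sum_range, show 2 * s + (k - s) + (n - 1 - s - k) + 1 = n by omega] at key
    rw [← key]
    refine sum_congr rfl fun j hj => ?_
    rw [mem_range] at hj
    congr 2
    omega
end

section
/- For nonnegative integers n, k, s with k, s ≤ ⌊(n-1)/2⌋ and s₀ = min(s,k), we have ∑_{j=0}^{s₀} C(s+k-2j, s-j) · C(n-1-s-k+2j, n-1-s-k+j) = ∑_{l=0}^{s₀} C(n, l). -/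
open Finset

private lemma pascal_sum (M s : ℕ) :
    ∑ l ∈ range (s + 1), (M + 1).choose l
      = ∑ l ∈ range (s + 1), M.choose l + ∑ l ∈ range s, M.choose l := by
  induction s with
  | zero => simp
  | succ s ih =>
      rw [sum_range_succ, ih, sum_range_succ (f := fun l => M.choose l) (n := s + 1),
        sum_range_succ (f := fun l => M.choose l) (n := s), Nat.choose_succ_succ]
      ring

private lemma key : ∀ B N s k : ℕ, s + k ≤ B →
    ∑ j ∈ range (min s k + 1), (s + k - 2 * j).choose (s - j) * (N + 2 * j).choose j
      = ∑ l ∈ range (min s k + 1), (N + s + k + 1).choose l := by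
  intro B
  induction B with
  | zero =>
      intro N s k h
      obtain rfl : s = 0 := by omega
      obtain rfl : k = 0 := by omega
      simp
  | succ B ih =>
      have step : ∀ N s k : ℕ, 1 ≤ s → s ≤ k → s + k ≤ B + 1 →
          ∑ j ∈ range (min s k + 1),
              (s + k - 2 * j).choose (s - j) * (N + 2 * j).choose j
            = ∑ l ∈ range (min s k + 1), (N + s + k + 1).choose l := by
        intro N s k hs hsk h
        rw [min_eq_left hsk]
        have hr : s - 1 + 1 = s := by omega
        have hpeel :
            ∑ j ∈ range (s + 1), (s + k - 2 * j).choose (s - j) * (N + 2 * j).choose j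
              = (∑ j ∈ range s, (s + k - 2 * j).choose (s - j) * (N + 2 * j).choose j)
                + (N + 2 * s).choose s := by
          rw [sum_range_succ]
          congr 1
          simp [Nat.sub_self]
        have hsplit : ∀ j ∈ range s,
            (s + k - 2 * j).choose (s - j) * (N + 2 * j).choose j
              = (s + k - 1 - 2 * j).choose (s - 1 - j) * (N + 2 * j).choose j
                + (s + k - 1 - 2 * j).choose (s - j) * (N + 2 * j).choose j := by
          intro j hj
          have hj' := mem_range.mp hj
          have e1 : s + k - 2 * j = (s + k - 1 - 2 * j) + 1 := by omega
          have e2 : s - j = (s - 1 - j) + 1 := by omega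
          rw [e1, e2, Nat.choose_succ_succ, add_mul, Nat.succ_eq_add_one, ← e2]
        rw [hpeel, sum_congr rfl hsplit, sum_add_distrib]
        have hS1 : ∑ j ∈ range s,
            (s + k - 1 - 2 * j).choose (s - 1 - j) * (N + 2 * j).choose j
              = ∑ l ∈ range s, (N + s + k).choose l := by
          have hih := ih N (s - 1) k (by omega)
          rw [min_eq_left (by omega), hr] at hih
          calc ∑ j ∈ range s,
                (s + k - 1 - 2 * j).choose (s - 1 - j) * (N + 2 * j).choose j
              = ∑ j ∈ range s,
                (s - 1 + k - 2 * j).choose (s - 1 - j) * (N + 2 * j).choose j := by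
                refine sum_congr rfl fun j hj => ?_
                have hj' := mem_range.mp hj
                congr 2
                omega
            _ = ∑ l ∈ range s, (N + (s - 1) + k + 1).choose l := hih
            _ = ∑ l ∈ range s, (N + s + k).choose l := by
                refine sum_congr rfl fun l hl => ?_
                congr 1
                omega
        have hS2 : (∑ j ∈ range s,
            (s + k - 1 - 2 * j).choose (s - j) * (N + 2 * j).choose j)
              + (N + 2 * s).choose s
              = ∑ l ∈ range (s + 1), (N + s + k).choose l := by
          rcases eq_or_lt_of_le hsk with rfl | hlt
          · -- s = k
            have hih := ih N s (s - 1) (by omega)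
            rw [min_eq_right (by omega), hr] at hih
            rw [sum_range_succ (f := fun l => (N + s + s).choose l)]
            congr 1
            · calc ∑ j ∈ range s,
                    (s + s - 1 - 2 * j).choose (s - j) * (N + 2 * j).choose j
                  = ∑ j ∈ range s,
                    (s + (s - 1) - 2 * j).choose (s - j) * (N + 2 * j).choose j := by
                    refine sum_congr rfl fun j hj => ?_
                    have hj' := mem_range.mp hj
                    congr 2
                    omega
                _ = ∑ l ∈ range s, (N + s + (s - 1) + 1).choose l := hih
                _ = ∑ l ∈ range s, (N + s + s).choose l := by
                    refine sum_congr rfl fun l hl => ?_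
                    congr 1
                    omega
            · congr 1
              omega
          · -- s < k
            have hih := ih N s (k - 1) (by omega)
            rw [min_eq_left (by omega)] at hih
            rw [sum_range_succ] at hih
            have hlast : (s + (k - 1) - 2 * s).choose (s - s) * (N + 2 * s).choose s
                = (N + 2 * s).choose s := by
              simp [Nat.sub_self]
            rw [hlast] at hih
            calc (∑ j ∈ range s,
                  (s + k - 1 - 2 * j).choose (s - j) * (N + 2 * j).choose j)
                    + (N + 2 * s).choose s
                = (∑ j ∈ range s,
                  (s + (k - 1) - 2 * j).choose (s - j) * (N + 2 * j).choose j)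
                    + (N + 2 * s).choose s := by
                  congr 1
                  refine sum_congr rfl fun j hj => ?_
                  have hj' := mem_range.mp hj
                  congr 2
                  omega
              _ = ∑ l ∈ range (s + 1), (N + s + (k - 1) + 1).choose l := hih
              _ = ∑ l ∈ range (s + 1), (N + s + k).choose l := by
                  refine sum_congr rfl fun l hl => ?_
                  congr 1
                  omega
        rw [hS1, pascal_sum (N + s + k) s, ← hS2]
        ring
      intro N s k h
      rcases Nat.eq_zero_or_pos s with rfl | hs
      · simp
      rcases Nat.eq_zero_or_pos k with rfl | hk
      · simp
      rcases le_total s k with hsk | hks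
      · exact step N s k hs hsk h
      · have hmain := step N k s hk hks (by omega)
        rw [min_comm s k, show N + s + k + 1 = N + k + s + 1 from by ring, ← hmain]
        refine sum_congr rfl fun j hj => ?_
        have hj' : j < min k s + 1 := mem_range.mp hj
        rw [show s + k - 2 * j = k + s - 2 * j from by ring_nf,
          show s - j = (k + s - 2 * j) - (k - j) from by omega,
          Nat.choose_symm (by omega)]

theorem stmt1 (n k s : ℕ) (hk : k ≤ (n - 1) / 2) (hs : s ≤ (n - 1) / 2) :
    ∑ j ∈ Finset.range (min s k + 1),
        (s + k - 2 * j).choose (s - j) *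
          (n - 1 - s - k + 2 * j).choose (n - 1 - s - k + j)
      = ∑ l ∈ Finset.range (min s k + 1), n.choose l := by
  rcases Nat.eq_zero_or_pos n with rfl | hn
  · obtain rfl : k = 0 := by omega
    obtain rfl : s = 0 := by omega
    simp
  · have hsum : s + k + 1 ≤ n := by omega
    have hL : ∀ j ∈ Finset.range (min s k + 1),
        (s + k - 2 * j).choose (s - j) *
            (n - 1 - s - k + 2 * j).choose (n - 1 - s - k + j)
          = (s + k - 2 * j).choose (s - j) * (n - 1 - s - k + 2 * j).choose j := by
      intro j hj
      congr 1
      rw [show n - 1 - s - k + j = (n - 1 - s - k + 2 * j) - j from by omega,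
        Nat.choose_symm (by omega)]
    rw [Finset.sum_congr rfl hL, key (s + k) (n - 1 - s - k) s k le_rfl]
    exact Finset.sum_congr rfl fun l _ => by congr 1; omega
end

section
/- Fix n and a barrier start position b₀ = 1 for even-indexed positions. Define T(n,i) as the number of i-element subsets γ = {γ₁ < γ₂ < ... < γᵢ} of {1,...,n} such that γⱼ ≠ 2j for all j (i.e., no element is 'at home'). Then for 1 ≤ i ≤ ⌊n/2⌋, T(n,i) = C(n,i) − C(n,i−1), and T(n,0) = 1. -/
/-!
Splitting configurations according to whether they contain the last position `n` gives the
recurrence `T(n, i) = T(n-1, i) + T(n-1, i-1)`, except for `n = 2i`: then `n` would be the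
`i`-th mark, at home, so `T(2i, i) = T(2i-1, i)`. On and above the diagonal `n ≤ 2i` the
recurrence is closed and preserves `T(n, i) = C(n, i) - C(n, i+1)`, the exceptional step being
absorbed by `C(2i-1, i-1) = C(2i-1, i)`. Below the diagonal the recurrence is the ordinary one,
which preserves `T(n, i) = C(n, i) - C(n, i-1)`, and on the diagonal both formulas agree by
symmetry.
-/

/-- `T n i` counts the `i`-element subsets `γ = {γ₁ < ⋯ < γᵢ}` of `{1,…,n}` such that
`γⱼ ≠ 2j` for every `j` (no mark is at home). -/
def T (n i : ℕ) : ℕ :=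
  (((Finset.Icc 1 n).powersetCard i).filter fun γ =>
    ∀ j ∈ Finset.range γ.card, (γ.sort (· ≤ ·)).getD j 0 ≠ 2 * (j + 1)).card

open Finset

namespace Finset

theorem sort_insert_of_forall_lt {α : Type*} [LinearOrder α] {s : Finset α} {a : α}
    (h : ∀ b ∈ s, b < a) : (insert a s).sort = s.sort ++ [a] := by
  have hpair : (s.sort ++ [a]).Pairwise (· < ·) := by
    simpa [List.pairwise_append] using ⟨(sortedLT_sort s).pairwise, h⟩
  have hset : (s.sort ++ [a]).toFinset = insert a s := by
    ext; simp
  rw [← hset]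
  exact (List.toFinset_sort _ hpair.nodup).2 (hpair.imp le_of_lt)

theorem card_filter_powersetCard_succ_insert {α : Type*} [DecidableEq α] {s : Finset α} {x : α}
    (hx : x ∉ s) (k : ℕ) (p : Finset α → Prop) [DecidablePred p] :
    #{γ ∈ (insert x s).powersetCard (k + 1) | p γ} =
      #{γ ∈ s.powersetCard (k + 1) | p γ} + #{γ ∈ s.powersetCard k | p (insert x γ)} := by
  have hxγ : ∀ γ ∈ s.powersetCard k, x ∉ γ := fun γ hγ hmem =>
    hx ((mem_powersetCard.1 hγ).1 hmem)
  have hdisj : Disjoint (s.powersetCard (k + 1)) ((s.powersetCard k).image (insert x)) := by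
    refine disjoint_left.2 fun γ hγ hγ' => ?_
    obtain ⟨δ, -, rfl⟩ := mem_image.1 hγ'
    exact hx ((mem_powersetCard.1 hγ).1 (mem_insert_self x δ))
  have hinj : Set.InjOn (insert x) (s.powersetCard k : Set (Finset α)) := by
    intro γ hγ δ hδ hγδ
    rw [← erase_insert (hxγ γ hγ), ← erase_insert (hxγ δ hδ), hγδ]
  rw [powersetCard_succ_insert hx, filter_union,
    card_union_of_disjoint (disjoint_filter_filter hdisj), filter_image,
    card_image_of_injOn (hinj.mono (coe_subset.2 (filter_subset _ _)))]

end Finset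

abbrev NoMarkAtHome (γ : Finset ℕ) : Prop :=
  ∀ j ∈ range #γ, γ.sort.getD j 0 ≠ 2 * (j + 1)

lemma T_eq_card_filter (n i : ℕ) : T n i = #{γ ∈ (Icc 1 n).powersetCard i | NoMarkAtHome γ} :=
  rfl

lemma noMarkAtHome_insert_of_forall_lt {γ : Finset ℕ} {a : ℕ} (h : ∀ b ∈ γ, b < a) :
    NoMarkAtHome (insert a γ) ↔ NoMarkAtHome γ ∧ a ≠ 2 * (#γ + 1) := by
  have ha : a ∉ γ := fun ha => (h a ha).false
  have hlen : γ.sort.length = #γ := length_sort _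
  unfold NoMarkAtHome
  rw [card_insert_of_notMem ha, range_add_one, forall_mem_insert, sort_insert_of_forall_lt h,
    List.getD_append_right _ _ _ _ hlen.le, hlen, Nat.sub_self, and_comm]
  refine and_congr_left' (forall₂_congr fun j hj => ?_)
  rw [List.getD_append _ _ _ _ (hlen ▸ mem_range.1 hj)]

lemma T_zero (n : ℕ) : T n 0 = 1 := by
  rw [T_eq_card_filter, powersetCard_zero, filter_singleton,
    if_pos fun j hj => absurd hj (by simp), card_singleton]

lemma T_eq_zero_of_lt {n i : ℕ} (h : n < i) : T n i = 0 := by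
  rw [T_eq_card_filter, powersetCard_eq_empty.2 (by simpa using h), filter_empty, card_empty]

lemma T_add_one_add_one (m k : ℕ) :
    T (m + 1) (k + 1) = T m (k + 1) + if m + 1 = 2 * (k + 1) then 0 else T m k := by
  have hlt : ∀ γ ∈ (Icc 1 m).powersetCard k, ∀ b ∈ γ, b < m + 1 := fun γ hγ b hb => by
    have := mem_Icc.1 ((mem_powersetCard.1 hγ).1 hb); omega
  rw [T_eq_card_filter, ← insert_Icc_right_eq_Icc_add_one (by omega),
    card_filter_powersetCard_succ_insert (by simp), ← T_eq_card_filter,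
    filter_congr fun γ hγ => by
      rw [noMarkAtHome_insert_of_forall_lt (hlt γ hγ), (mem_powersetCard.1 hγ).2]]
  split_ifs with hhome <;> simp [hhome, T_eq_card_filter]

lemma T_add_choose_add_one_of_le_two_mul {m k : ℕ} (h : m ≤ 2 * k) :
    T m k + m.choose (k + 1) = m.choose k := by
  induction m generalizing k with
  | zero =>
    cases k with
    | zero => simp [T_zero]
    | succ k => simp [T_eq_zero_of_lt (Nat.succ_pos k)]
  | succ m ih =>
    obtain ⟨k, rfl⟩ : ∃ k', k = k' + 1 := Nat.exists_eq_add_one.2 (by omega)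
    have ih₁ := ih (k := k + 1) (by omega)
    rw [T_add_one_add_one, Nat.choose_succ_succ' m (k + 1), Nat.choose_succ_succ' m k]
    split_ifs with hhome
    · obtain rfl : m = 2 * k + 1 := by omega
      have hmid := Nat.choose_symm_half k
      omega
    · have ih₀ := ih (k := k) (by omega)
      omega

lemma T_add_choose_eq_choose_add_one {m k : ℕ} (h : 2 * (k + 1) ≤ m) :
    T m (k + 1) + m.choose k = m.choose (k + 1) := by
  induction m generalizing k with
  | zero => omega
  | succ m ih =>
    by_cases hdiag : m + 1 = 2 * (k + 1)
    · rw [← Nat.choose_symm_of_eq_add (by omega : m + 1 = (k + 2) + k)]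
      exact T_add_choose_add_one_of_le_two_mul hdiag.le
    have ih₁ := ih (k := k) (by omega)
    rw [T_add_one_add_one, if_neg hdiag, Nat.choose_succ_succ' m k]
    cases k with
    | zero => simp only [T_zero, Nat.choose_zero_right] at ih₁ ⊢; omega
    | succ k =>
      have ih₀ := ih (k := k) (by omega)
      rw [Nat.choose_succ_succ' m k]
      omega

theorem stmt2 (n i : ℕ) (h1 : 1 ≤ i) (h2 : i ≤ n / 2) :
    T n i = n.choose i - n.choose (i - 1) ∧ T n 0 = 1 := by
  obtain ⟨k, rfl⟩ : ∃ k, i = k + 1 := Nat.exists_eq_add_one.2 h1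
  have h := T_add_choose_eq_choose_add_one (m := n) (k := k) (by omega)
  exact ⟨by rw [Nat.add_sub_cancel]; omega, T_zero n⟩
end

section
/- Let G = (V,E) be a finite simple graph with n vertices. For a composition-type count, let A^k_α be the set of pairs (κ, L) where κ is a proper coloring of G whose associated composition (sequence of nonzero color-class sizes in color order) is α, L is a bijective labeling V → {1,...,n}, and the number of ascents (edges {u,v} with L(u)<L(v), κ(u)<κ(v)) is k. Then |A^k_α| = |A^k_{α^rev}|, where α^rev is the reverse of α. -/
private lemma asc_rev {V : Type*} [Fintype V] [DecidableEq V] (G : SimpleGraph V)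
    [DecidableRel G.Adj] {ℓ n : ℕ} (f : V → Fin ℓ) (e : V ≃ Fin n) :
    (Finset.univ.filter fun q : V × V =>
      G.Adj q.1 q.2 ∧ (e q.1).rev < (e q.2).rev ∧ (f q.1).rev < (f q.2).rev).card =
    (Finset.univ.filter fun q : V × V =>
      G.Adj q.1 q.2 ∧ e q.1 < e q.2 ∧ f q.1 < f q.2).card := by
  apply Finset.card_bij (fun q _ => q.swap)
  · rintro ⟨u, v⟩ hq
    simp only [Finset.mem_filter, Finset.mem_univ, true_and, Fin.rev_lt_rev] at hq ⊢
    exact ⟨hq.1.symm, hq.2.1, hq.2.2⟩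
  · rintro ⟨u, v⟩ _ ⟨u', v'⟩ _ h
    simpa [Prod.ext_iff, and_comm] using h
  · rintro ⟨u, v⟩ hq
    refine ⟨(v, u), ?_, rfl⟩
    simp only [Finset.mem_filter, Finset.mem_univ, true_and, Fin.rev_lt_rev] at hq ⊢
    exact ⟨hq.1.symm, hq.2.1, hq.2.2⟩

private lemma mem_rev {V : Type*} [Fintype V] [DecidableEq V] (G : SimpleGraph V)
    [DecidableRel G.Adj] {ℓ : ℕ} (β : Fin ℓ → ℕ) (k : ℕ)
    (p : (V → Fin ℓ) × (V ≃ Fin (Fintype.card V)))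
    (hp : (∀ u v, G.Adj u v → p.1 u ≠ p.1 v) ∧
        (∀ j, (Finset.univ.filter fun v => p.1 v = j).card = β j) ∧
        (Finset.univ.filter fun q : V × V =>
          G.Adj q.1 q.2 ∧ p.2 q.1 < p.2 q.2 ∧ p.1 q.1 < p.1 q.2).card = k) :
    (∀ u v, G.Adj u v → (p.1 u).rev ≠ (p.1 v).rev) ∧
        (∀ j, (Finset.univ.filter fun v => (p.1 v).rev = j).card = β j.rev) ∧
        (Finset.univ.filter fun q : V × V =>
          G.Adj q.1 q.2 ∧ (p.2.trans Fin.revPerm) q.1 < (p.2.trans Fin.revPerm) q.2 ∧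
            (p.1 q.1).rev < (p.1 q.2).rev).card = k := by
  obtain ⟨h1, h2, h3⟩ := hp
  refine ⟨fun u v huv hne => h1 u v huv (by simpa using congrArg Fin.rev hne),
    fun j => ?_, ?_⟩
  · rw [← h2 j.rev]
    congr 1
    apply Finset.filter_congr
    intro v _
    constructor
    · rintro rfl; simp
    · intro h; rw [h, Fin.rev_rev]
  · rw [← h3]
    exact asc_rev G p.1 p.2

theorem stmt11 {V : Type*} [Fintype V] [DecidableEq V] (G : SimpleGraph V)
    [DecidableRel G.Adj] (ℓ : ℕ) (α : Fin ℓ → ℕ) (hα : ∀ j, 0 < α j) (k : ℕ) :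
    (Finset.univ.filter fun p : (V → Fin ℓ) × (V ≃ Fin (Fintype.card V)) =>
        (∀ u v, G.Adj u v → p.1 u ≠ p.1 v) ∧
        (∀ j, (Finset.univ.filter fun v => p.1 v = j).card = α j) ∧
        (Finset.univ.filter fun q : V × V =>
          G.Adj q.1 q.2 ∧ p.2 q.1 < p.2 q.2 ∧ p.1 q.1 < p.1 q.2).card = k).card =
      (Finset.univ.filter fun p : (V → Fin ℓ) × (V ≃ Fin (Fintype.card V)) =>
        (∀ u v, G.Adj u v → p.1 u ≠ p.1 v) ∧
        (∀ j, (Finset.univ.filter fun v => p.1 v = j).card = α j.rev) ∧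
        (Finset.univ.filter fun q : V × V =>
          G.Adj q.1 q.2 ∧ p.2 q.1 < p.2 q.2 ∧ p.1 q.1 < p.1 q.2).card = k).card := by
  apply Finset.card_bij' (fun p _ => ((fun v => (p.1 v).rev, p.2.trans Fin.revPerm)))
    (fun p _ => ((fun v => (p.1 v).rev, p.2.trans Fin.revPerm)))
  · rintro ⟨f, e⟩ _
    refine Prod.ext ?_ ?_
    · funext v; exact Fin.rev_rev _
    · ext v; simp [Fin.rev_rev]
  · rintro ⟨f, e⟩ _
    refine Prod.ext ?_ ?_
    · funext v; exact Fin.rev_rev _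
    · ext v; simp [Fin.rev_rev]
  · intro p hp
    simp only [Finset.mem_filter, Finset.mem_univ, true_and] at hp ⊢
    exact mem_rev G α k p hp
  · intro p hp
    simp only [Finset.mem_filter, Finset.mem_univ, true_and] at hp ⊢
    have := mem_rev G (fun j => α j.rev) k p hp
    simpa [Fin.rev_rev] using this
end

section
/- Let G = (V,E) be a finite simple graph and write Tχ^o_G(q) = ∑_α c^o_α(q) M_α. Then each c^o_α(q) is a palindromic polynomial of degree |E|: for all 0 ≤ k ≤ |E|, the coefficient of q^k in c^o_α(q) equals the coefficient of q^{|E|−k}. Equivalently, for any fixed proper coloring κ, the number of acyclic orientations γ with asc^γ(κ) = k equals the number with asc^γ(κ) = |E| − k. -/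
/-!
Reversing every arc is an involution on acyclic orientations of `G`. Since `κ` is proper, each
arc of an orientation is either an ascent or a descent of `κ`, and reversal exchanges the two; as
an orientation has exactly one arc per edge, reversal turns `k` ascents into `|E| - k`.
-/

open Finset Relation

namespace SimpleGraph

variable {V : Type*}

/-- An orientation of `G` is encoded as the finset of its arcs `(tail, head)`. -/
def IsAcyclicOrientation (G : SimpleGraph V) (D : Finset (V × V)) : Prop :=
  (∀ q ∈ D, G.Adj q.1 q.2) ∧
  (∀ u v, G.Adj u v → ((u, v) ∈ D ↔ (v, u) ∉ D)) ∧
  (∀ v, ¬ TransGen (fun a b => (a, b) ∈ D) v v)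

def ascents (κ : V → ℕ) (D : Finset (V × V)) : Finset (V × V) :=
  D.filter fun q => κ q.1 < κ q.2

def reverse (D : Finset (V × V)) : Finset (V × V) :=
  D.map (Equiv.prodComm V V).toEmbedding

@[simp]
lemma mem_reverse {D : Finset (V × V)} {q : V × V} : q ∈ reverse D ↔ q.swap ∈ D :=
  mem_map_equiv

@[simp]
lemma reverse_reverse (D : Finset (V × V)) : reverse (reverse D) = D := by
  ext q
  simp

lemma transGen_reverse_iff {D : Finset (V × V)} {u v : V} :
    TransGen (fun a b => (a, b) ∈ reverse D) u v ↔ TransGen (fun a b => (a, b) ∈ D) v u := by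
  simpa using transGen_swap (r := fun a b => (a, b) ∈ D)

lemma card_ascents_reverse (κ : V → ℕ) (D : Finset (V × V)) :
    #(ascents κ (reverse D)) = #(D.filter fun q => κ q.2 < κ q.1) :=
  card_equiv (Equiv.prodComm V V) fun q => by simp [ascents]

namespace IsAcyclicOrientation

variable {G : SimpleGraph V} {D : Finset (V × V)}

lemma reverse (hD : G.IsAcyclicOrientation D) : G.IsAcyclicOrientation (reverse D) := by
  obtain ⟨hadj, horient, hacyclic⟩ := hD
  refine ⟨fun q hq => (hadj _ (mem_reverse.1 hq)).symm, fun u v huv => ?_, fun v hv =>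
    hacyclic v (transGen_reverse_iff.1 hv)⟩
  simpa using horient v u huv.symm

lemma card_eq_card_edgeFinset [Fintype G.edgeSet] (hD : G.IsAcyclicOrientation D) :
    #D = #G.edgeFinset := by
  obtain ⟨hadj, horient, -⟩ := hD
  refine card_bij (fun q _ => s(q.1, q.2)) (fun q hq => by simpa using hadj q hq) ?_ ?_
  · rintro ⟨u, v⟩ huv ⟨u', v'⟩ huv' heq
    rcases Sym2.eq_iff.1 heq with ⟨rfl, rfl⟩ | ⟨rfl, rfl⟩
    · rfl
    · exact absurd huv' ((horient _ _ (hadj _ huv)).1 huv)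
  · intro e he
    induction e using Sym2.ind with
    | _ u v =>
      by_cases huv : (u, v) ∈ D
      · exact ⟨(u, v), huv, rfl⟩
      · exact ⟨(v, u), not_not.1 (mt (horient u v (by simpa using he)).2 huv), Sym2.eq_swap⟩

/-- Properness of `κ` is what makes every non-ascent a descent. -/
lemma card_ascents_reverse_eq [Fintype G.edgeSet] (hD : G.IsAcyclicOrientation D)
    {κ : V → ℕ} (hκ : ∀ u v, G.Adj u v → κ u ≠ κ v) :
    #(ascents κ (SimpleGraph.reverse D)) = #G.edgeFinset - #(ascents κ D) := by
  have hdesc : (D.filter fun q => κ q.2 < κ q.1) = D.filter fun q => ¬ κ q.1 < κ q.2 :=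
    filter_congr fun q hq => by have := hκ _ _ (hD.1 q hq); omega
  have hsplit := card_filter_add_card_filter_not (s := D) (p := fun q => κ q.1 < κ q.2)
  rw [card_ascents_reverse, hdesc, ← hD.card_eq_card_edgeFinset, ← hsplit, ascents]
  omega

end IsAcyclicOrientation

end SimpleGraph

open SimpleGraph in
open scoped Classical in
theorem stmt15 {V : Type*} [Fintype V] [DecidableEq V] (G : SimpleGraph V)
    [DecidableRel G.Adj] (κ : V → ℕ) (hκ : ∀ u v, G.Adj u v → κ u ≠ κ v)
    (k : ℕ) (hk : k ≤ G.edgeFinset.card) :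
    (Finset.univ.filter fun D : Finset (V × V) =>
        (∀ q ∈ D, G.Adj q.1 q.2) ∧
        (∀ u v, G.Adj u v → ((u, v) ∈ D ↔ (v, u) ∉ D)) ∧
        (∀ v, ¬ Relation.TransGen (fun a b => (a, b) ∈ D) v v) ∧
        (D.filter fun q => κ q.1 < κ q.2).card = k).card =
      (Finset.univ.filter fun D : Finset (V × V) =>
        (∀ q ∈ D, G.Adj q.1 q.2) ∧
        (∀ u v, G.Adj u v → ((u, v) ∈ D ↔ (v, u) ∉ D)) ∧
        (∀ v, ¬ Relation.TransGen (fun a b => (a, b) ∈ D) v v) ∧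
        (D.filter fun q => κ q.1 < κ q.2).card = G.edgeFinset.card - k).card := by
  have reverse_mem : ∀ D j, G.IsAcyclicOrientation D ∧ #(ascents κ D) = j →
      G.IsAcyclicOrientation (reverse D) ∧ #(ascents κ (reverse D)) = #G.edgeFinset - j :=
    fun D j ⟨hD, hj⟩ => ⟨hD.reverse, hj ▸ hD.card_ascents_reverse_eq hκ⟩
  simp only [IsAcyclicOrientation, ascents, and_assoc] at reverse_mem
  refine card_bij' (fun D _ => reverse D) (fun D _ => reverse D) ?_ ?_
    (fun D _ => reverse_reverse D) (fun D _ => reverse_reverse D)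
  · intro D hD
    simpa only [mem_filter, mem_univ, true_and] using reverse_mem D k (by simpa using hD)
  · intro D hD
    rw [← Nat.sub_sub_self hk]
    simpa only [mem_filter, mem_univ, true_and] using reverse_mem D _ (by simpa using hD)
end

section
/- Let G = (V,E) and G' = (V',E') be finite simple graphs with disjoint vertex sets and H = G ⊔ G'. Then Tχ^L_H(q) = C(|V|+|V'|, |V|) · Tχ^L_G(q) · Tχ^L_{G'}(q), where Tχ^L denotes the sum of the chromatic quasisymmetric function over all bijective labelings of the vertices. -/
/-- The disjoint union of two simple graphs. -/
def sumGraph {V V' : Type*} (G : SimpleGraph V) (G' : SimpleGraph V') :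
    SimpleGraph (V ⊕ V') where
  Adj x y :=
    match x, y with
    | Sum.inl a, Sum.inl b => G.Adj a b
    | Sum.inr a, Sum.inr b => G'.Adj a b
    | _, _ => False
  symm := by
    constructor
    rintro (a | a) (b | b) h
    · exact G.adj_symm h
    · exact h.elim
    · exact h.elim
    · exact G'.adj_symm h
  loopless := by
    constructor
    rintro (a | a) h
    · exact G.loopless.irrefl a h
    · exact G'.loopless.irrefl a h

open scoped Classical in
/-- The total labeling chromatic quasisymmetric function of `G`, truncated to the color
set `Fin c`: the sum over all bijective labelings and proper colorings of
`q^(number of ascents) · x^κ`. -/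
noncomputable def TchiL {V : Type*} [Fintype V] (G : SimpleGraph V) (c : ℕ) :
    MvPolynomial (Fin c) (Polynomial ℚ) :=
  ∑ p ∈ Finset.univ.filter (fun p : (V ≃ Fin (Fintype.card V)) × (V → Fin c) =>
      ∀ u v, G.Adj u v → p.2 u ≠ p.2 v),
    MvPolynomial.C (Polynomial.X ^
      (Finset.univ.filter fun q : V × V =>
        G.Adj q.1 q.2 ∧ p.1 q.1 < p.1 q.2 ∧ p.2 q.1 < p.2 q.2).card) *
      ∏ v, MvPolynomial.X (p.2 v)


/-!
A bijective labeling of `V ⊕ V'` by `Fin (|V| + |V'|)` is the same thing as a `|V|`-element set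
`s` of labels together with bijective labelings of `V` by `Fin |V|` and of `V'` by `Fin |V'|`:
interleave them, giving `V` the labels in `s` in increasing order. Ascents only see the relative
order of labels, and a proper coloring of `G ⊔ G'` is a pair of proper colorings, so
`X_{G ⊔ G'}^L = X_G^{L|V} · X_{G'}^{L|V'}` and each pair of labelings occurs once for each of the
`C(|V| + |V'|, |V|)` sets `s`.
-/

open Finset MvPolynomial

lemma forall_sumGraph_adj_iff {V V' : Type*} (G : SimpleGraph V) (G' : SimpleGraph V')
    (P : V ⊕ V' → V ⊕ V' → Prop) :
    (∀ u v, (sumGraph G G').Adj u v → P u v) ↔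
      (∀ u v, G.Adj u v → P (.inl u) (.inl v)) ∧ ∀ u v, G'.Adj u v → P (.inr u) (.inr v) := by
  simp [Sum.forall, sumGraph]

section LabeledChromatic

variable {V V' α σ R : Type*} [Fintype V] [Fintype V']

open scoped Classical in
noncomputable def ascents [LT α] [LT σ] (G : SimpleGraph V) (L : V → α) (κ : V → σ) : ℕ :=
  #{q : V × V | G.Adj q.1 q.2 ∧ L q.1 < L q.2 ∧ κ q.1 < κ q.2}

open scoped Classical in
/-- The chromatic quasisymmetric function `X_G^L(q)` of `G` for the labeling `L`, with colors
in `σ`. -/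
noncomputable def labeledChromaticQSym [DecidableEq V] [CommSemiring R] [LT α] [LT σ] [Fintype σ]
    (G : SimpleGraph V) (L : V → α) : MvPolynomial σ (Polynomial R) :=
  ∑ κ : V → σ, if ∀ u v, G.Adj u v → κ u ≠ κ v then
    C (Polynomial.X ^ ascents G L κ) * ∏ v, X (κ v) else 0

lemma ascents_congr_of_lt_iff {β : Type*} [LT α] [LT β] [LT σ] (G : SimpleGraph V)
    {L : V → α} {L' : V → β} (h : ∀ u v, L u < L v ↔ L' u < L' v) (κ : V → σ) :
    ascents G L κ = ascents G L' κ := by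
  unfold ascents
  congr 1
  ext q
  simp only [mem_filter, h]

lemma ascents_sumGraph [LT α] [LT σ] (G : SimpleGraph V) (G' : SimpleGraph V')
    (L : V ⊕ V' → α) (κ : V ⊕ V' → σ) :
    ascents (sumGraph G G') L κ =
      ascents G (L ∘ Sum.inl) (κ ∘ Sum.inl) + ascents G' (L ∘ Sum.inr) (κ ∘ Sum.inr) := by
  rw [ascents, ascents, ascents, card_filter, card_filter, card_filter]
  simp only [Fintype.sum_prod_type, Fintype.sum_sum_type, Function.comp_apply]
  simp only [sumGraph, false_and, if_false, sum_const_zero, add_zero, zero_add]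
  -- the two sides now differ only in their `Decidable` instances
  congr!

lemma labeledChromaticQSym_congr_of_lt_iff {β : Type*} [DecidableEq V] [CommSemiring R] [LT α]
    [LT β] [LT σ] [Fintype σ] (G : SimpleGraph V) {L : V → α} {L' : V → β}
    (h : ∀ u v, L u < L v ↔ L' u < L' v) :
    (labeledChromaticQSym G L : MvPolynomial σ (Polynomial R)) = labeledChromaticQSym G L' := by
  simp only [labeledChromaticQSym, ascents_congr_of_lt_iff G h]

lemma labeledChromaticQSym_sumGraph [DecidableEq V] [DecidableEq V'] [CommSemiring R] [LT α]
    [LT σ] [Fintype σ] (G : SimpleGraph V) (G' : SimpleGraph V') (L : V ⊕ V' → α) :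
    (labeledChromaticQSym (sumGraph G G') L : MvPolynomial σ (Polynomial R)) =
      labeledChromaticQSym G (L ∘ Sum.inl) * labeledChromaticQSym G' (L ∘ Sum.inr) := by
  classical
  rw [labeledChromaticQSym, labeledChromaticQSym, labeledChromaticQSym, Fintype.sum_mul_sum,
    ← Fintype.sum_prod_type' (γ := MvPolynomial σ (Polynomial R))]
  refine Fintype.sum_equiv (Equiv.sumArrowEquivProdArrow V V' σ) _ _ fun κ => ?_
  rw [ite_zero_mul_ite_zero, ascents_sumGraph, Fintype.prod_sum_type, pow_add, C_mul,
    mul_mul_mul_comm]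
  exact if_congr (forall_sumGraph_adj_iff G G' _) rfl rfl

lemma TchiL_eq_sum_labeledChromaticQSym [DecidableEq V] (G : SimpleGraph V) (c : ℕ) :
    TchiL G c = ∑ L : V ≃ Fin (Fintype.card V), labeledChromaticQSym G L := by
  simp only [TchiL, labeledChromaticQSym, ascents, sum_filter, Fintype.sum_prod_type]
  -- `TchiL` decides equality on `V` classically, the right-hand side by the given instance
  congr!

end LabeledChromatic

section Shuffle

variable {n m : ℕ} {V V' : Type*}

lemma card_compl_of_card_eq (s : Finset (Fin (n + m))) (hs : #s = n) : #sᶜ = m := by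
  rw [card_compl, Fintype.card_fin, hs, Nat.add_sub_cancel_left]

/-- The order-preserving identification of `Fin n ⊕ Fin m` with `Fin (n + m)` that sends `Fin n`
onto `s` and `Fin m` onto its complement. -/
noncomputable def shuffleEquiv (s : Finset (Fin (n + m))) (hs : #s = n) :
    Fin n ⊕ Fin m ≃ Fin (n + m) :=
  (Equiv.sumCongr (s.orderIsoOfFin hs).toEquiv
    ((sᶜ.orderIsoOfFin (card_compl_of_card_eq s hs)).toEquiv.trans
      (Equiv.subtypeEquivRight fun _ => mem_compl))).trans
    (Equiv.sumCompl (· ∈ s))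

lemma shuffleEquiv_inl_lt_inl_iff (s : Finset (Fin (n + m))) (hs : #s = n) (i j : Fin n) :
    shuffleEquiv s hs (.inl i) < shuffleEquiv s hs (.inl j) ↔ i < j :=
  (s.orderEmbOfFin hs).lt_iff_lt

lemma shuffleEquiv_inr_lt_inr_iff (s : Finset (Fin (n + m))) (hs : #s = n) (i j : Fin m) :
    shuffleEquiv s hs (.inr i) < shuffleEquiv s hs (.inr j) ↔ i < j :=
  (sᶜ.orderEmbOfFin (card_compl_of_card_eq s hs)).lt_iff_lt

lemma range_shuffleEquiv_inl (s : Finset (Fin (n + m))) (hs : #s = n) :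
    Set.range (shuffleEquiv s hs ∘ Sum.inl) = s := by
  rw [← s.range_orderEmbOfFin hs]
  rfl

noncomputable def shuffleLabeling
    (t : {s : Finset (Fin (n + m)) // #s = n} × (V ≃ Fin n) × (V' ≃ Fin m)) :
    V ⊕ V' ≃ Fin (n + m) :=
  (Equiv.sumCongr t.2.1 t.2.2).trans (shuffleEquiv t.1.1 t.1.2)

lemma shuffleLabeling_injective :
    Function.Injective (shuffleLabeling : {s : Finset (Fin (n + m)) // #s = n} × (V ≃ Fin n) ×
      (V' ≃ Fin m) → V ⊕ V' ≃ Fin (n + m)) := by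
  rintro ⟨⟨s, hs⟩, e, e'⟩ ⟨⟨s', hs'⟩, f, f'⟩ h
  have hrange (t : {s : Finset (Fin (n + m)) // #s = n} × (V ≃ Fin n) × (V' ≃ Fin m)) :
      Set.range (shuffleLabeling t ∘ Sum.inl) = t.1.1 := by
    rw [← range_shuffleEquiv_inl t.1.1 t.1.2, ← EquivLike.range_comp _ t.2.1]
    rfl
  obtain rfl : s = s' := by
    have := congrArg (fun L : V ⊕ V' ≃ Fin (n + m) => Set.range (L ∘ Sum.inl)) h
    simpa only [hrange, coe_inj] using this
  have hsum : Equiv.sumCongr e e' = Equiv.sumCongr f f' := by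
    simpa only [shuffleLabeling, Equiv.trans_cancel_right, Equiv.trans_assoc, Equiv.self_trans_symm,
      Equiv.trans_refl] using h
  obtain rfl : e = f := Equiv.ext fun v => Sum.inl_injective (Equiv.congr_fun hsum (.inl v))
  obtain rfl : e' = f' := Equiv.ext fun v => Sum.inr_injective (Equiv.congr_fun hsum (.inr v))
  rfl

lemma shuffleLabeling_bijective [Fintype V] [Fintype V'] [DecidableEq V] [DecidableEq V'] :
    Function.Bijective (shuffleLabeling : {s : Finset (Fin (Fintype.card V + Fintype.card V')) //
      #s = Fintype.card V} × (V ≃ Fin (Fintype.card V)) × (V' ≃ Fin (Fintype.card V')) →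
      V ⊕ V' ≃ Fin (Fintype.card V + Fintype.card V')) := by
  refine (Fintype.bijective_iff_injective_and_card _).2 ⟨shuffleLabeling_injective, ?_⟩
  rw [Fintype.card_prod, Fintype.card_prod, Fintype.card_finset_len, Fintype.card_fin,
    Fintype.card_equiv (Fintype.equivFin V), Fintype.card_equiv (Fintype.equivFin V'),
    Fintype.card_equiv ((Fintype.equivFin _).trans (finCongr Fintype.card_sum)), Fintype.card_sum,
    ← mul_assoc, Nat.choose_symm_add, Nat.add_choose_mul_factorial_mul_factorial]

end Shuffle

lemma labeledChromaticQSym_sumGraph_shuffleLabeling {n m : ℕ} {V V' σ R : Type*} [Fintype V]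
    [Fintype V'] [DecidableEq V] [DecidableEq V'] [CommSemiring R] [LT σ] [Fintype σ]
    (G : SimpleGraph V) (G' : SimpleGraph V')
    (t : {s : Finset (Fin (n + m)) // #s = n} × (V ≃ Fin n) × (V' ≃ Fin m)) :
    (labeledChromaticQSym (sumGraph G G') (shuffleLabeling t) : MvPolynomial σ (Polynomial R)) =
      labeledChromaticQSym G t.2.1 * labeledChromaticQSym G' t.2.2 := by
  rw [labeledChromaticQSym_sumGraph,
    labeledChromaticQSym_congr_of_lt_iff G (L := shuffleLabeling t ∘ Sum.inl)
      fun u v => shuffleEquiv_inl_lt_inl_iff t.1.1 t.1.2 (t.2.1 u) (t.2.1 v),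
    labeledChromaticQSym_congr_of_lt_iff G' (L := shuffleLabeling t ∘ Sum.inr)
      fun u v => shuffleEquiv_inr_lt_inr_iff t.1.1 t.1.2 (t.2.2 u) (t.2.2 v)]

theorem stmt17 {V V' : Type*} [Fintype V] [Fintype V']
    (G : SimpleGraph V) (G' : SimpleGraph V') (c : ℕ) :
    TchiL (sumGraph G G') c =
      ((Fintype.card V + Fintype.card V').choose (Fintype.card V) :
          MvPolynomial (Fin c) (Polynomial ℚ)) *
        TchiL G c * TchiL G' c := by
  classical
  have hsum : TchiL (sumGraph G G') c = ∑ L : V ⊕ V' ≃ Fin (Fintype.card V + Fintype.card V'),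
      labeledChromaticQSym (sumGraph G G') L := by
    rw [TchiL_eq_sum_labeledChromaticQSym, Fintype.card_sum]
  rw [hsum, ← shuffleLabeling_bijective.sum_comp, TchiL_eq_sum_labeledChromaticQSym,
    TchiL_eq_sum_labeledChromaticQSym]
  simp only [labeledChromaticQSym_sumGraph_shuffleLabeling, Fintype.sum_prod_type, sum_const,
    card_univ, Fintype.card_finset_len, Fintype.card_fin, nsmul_eq_mul, Fintype.sum_mul_sum,
    mul_assoc]
end
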